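/- arXiv:gr-qc/0309115 — 2 statements merged into one kernel-verified Lean document; each statement's English description precedes it below -/
import Mathlib

section
/- Let x : [V,∞) → ℝ satisfy |x(v)| ≤ ∫_V^v (|θ(v*)|/r₁) e^{−c(v−v*)} dv* + A e^{−c(v−V)} with c, r₁ > 0, A ≥ 0, and suppose ∫_V^∞ θ²(v*) dv* ≤ E. Then for all v ≥ V: |x(v)| ≤ r₁⁻¹ √E · (2c)^{−1/2} + A e^{−c(v−V)}. In particular if additionally v − V ≥ c⁻¹ log D for some D > 1 then |x(v)| ≤ r₁⁻¹ √E (2c)^{−1/2} + A/D. -/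
/-!
Cauchy–Schwarz splits the kernel integral `∫ |θ s| e^{-c(v-s)} ds` into `‖θ‖_{L²} ≤ √E` times
`(∫ e^{-2c(v-s)} ds)^{1/2} ≤ (2c)^{-1/2}`, a bound uniform in `v`. The remaining term
`A e^{-c(v-V)}` is at most `A/D` as soon as `c(v-V) ≥ log D`.
-/

open Real MeasureTheory

theorem integral_abs_mul_abs_le_sqrt_mul_sqrt {α : Type*} [MeasurableSpace α] {μ : Measure α}
    {f g : α → ℝ} (hf : MemLp f 2 μ) (hg : MemLp g 2 μ) :
    ∫ a, |f a| * |g a| ∂μ ≤ √(∫ a, f a ^ 2 ∂μ) * √(∫ a, g a ^ 2 ∂μ) := by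
  have h := integral_mul_norm_le_Lp_mul_Lq Real.HolderConjugate.two_two
    (by simpa using hf) (by simpa using hg)
  simp only [Real.norm_eq_abs, Real.rpow_two, sq_abs] at h
  rwa [Real.sqrt_eq_rpow, Real.sqrt_eq_rpow]

theorem integral_exp_neg_mul_sub (k a b : ℝ) (hk : k ≠ 0) :
    ∫ s in a..b, exp (-k * (b - s)) = (1 - exp (-k * (b - a))) / k := by
  have h := intervalIntegral.integral_comp_mul_add (a := a) (b := b) exp hk (-k * b)
  rw [show (fun s => exp (-k * (b - s))) = fun s => exp (k * s + -k * b) by ext; ring_nf, h,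
    smul_eq_mul, integral_exp, div_eq_inv_mul]
  ring_nf
  rw [exp_zero, mul_one]

theorem integral_exp_neg_mul_sub_le {k : ℝ} (hk : 0 < k) (a b : ℝ) :
    ∫ s in a..b, exp (-k * (b - s)) ≤ k⁻¹ := by
  rw [integral_exp_neg_mul_sub k a b hk.ne', div_eq_mul_inv]
  have := exp_pos (-k * (b - a))
  nlinarith [inv_pos.mpr hk]

theorem IntervalIntegrable.memLp_two_restrict_Ioc {θ : ℝ → ℝ} {a b : ℝ}
    (hθ : IntervalIntegrable θ volume a b)
    (hθ2 : IntervalIntegrable (fun s => θ s ^ 2) volume a b) :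
    MemLp θ 2 (volume.restrict (Set.Ioc a b)) :=
  (memLp_two_iff_integrable_sq hθ.1.aestronglyMeasurable).mpr hθ2.1

theorem integral_abs_mul_exp_neg_mul_sub_le {θ : ℝ → ℝ} {k a b : ℝ} (hk : 0 < k) (hab : a ≤ b)
    (hθ : IntervalIntegrable θ volume a b)
    (hθ2 : IntervalIntegrable (fun s => θ s ^ 2) volume a b) :
    ∫ s in a..b, |θ s| * exp (-k * (b - s)) ≤ √(∫ s in a..b, θ s ^ 2) * (√(2 * k))⁻¹ := by
  have hexp : ∀ s, exp (-k * (b - s)) ^ 2 = exp (-(2 * k) * (b - s)) := fun s => by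
    rw [← exp_nat_mul]; ring_nf
  have hexp_memLp : MemLp (fun s => exp (-k * (b - s))) 2 (volume.restrict (Set.Ioc a b)) :=
    (Continuous.intervalIntegrable (by fun_prop) a b).memLp_two_restrict_Ioc
      (Continuous.intervalIntegrable (by fun_prop) a b)
  calc ∫ s in a..b, |θ s| * exp (-k * (b - s))
      = ∫ s in Set.Ioc a b, |θ s| * |exp (-k * (b - s))| := by
        simp only [abs_exp, intervalIntegral.integral_of_le hab]
    _ ≤ √(∫ s in Set.Ioc a b, θ s ^ 2) * √(∫ s in Set.Ioc a b, exp (-k * (b - s)) ^ 2) :=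
        integral_abs_mul_abs_le_sqrt_mul_sqrt (hθ.memLp_two_restrict_Ioc hθ2) hexp_memLp
    _ ≤ √(∫ s in a..b, θ s ^ 2) * (√(2 * k))⁻¹ := by
        simp only [← intervalIntegral.integral_of_le hab, hexp]
        rw [← sqrt_inv]
        gcongr
        exact integral_exp_neg_mul_sub_le (by positivity) a b

theorem exp_neg_mul_le_inv_of_log_le {c D t : ℝ} (hc : 0 < c) (hD : 0 < D)
    (ht : c⁻¹ * log D ≤ t) : exp (-c * t) ≤ D⁻¹ := by
  rw [← exp_log (inv_pos.mpr hD), log_inv, exp_le_exp]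
  have := (inv_mul_le_iff₀ hc).mp ht
  linarith

theorem stmt_4_general (V c r₁ A E : ℝ) (x θ : ℝ → ℝ)
    (hc : 0 < c) (hr₁ : 0 < r₁) (hA : 0 ≤ A)
    (hθint : ∀ v, V ≤ v → IntervalIntegrable θ MeasureTheory.volume V v)
    (hθsq : ∀ v, V ≤ v → IntervalIntegrable (fun s => (θ s) ^ 2) MeasureTheory.volume V v)
    (hEbound : ∀ v, V ≤ v → (∫ s in V..v, (θ s) ^ 2) ≤ E)
    (hbound : ∀ v, V ≤ v →
      |x v| ≤ (∫ s in V..v, (|θ s| / r₁) * Real.exp (-c * (v - s))) +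
        A * Real.exp (-c * (v - V))) :
    (∀ v, V ≤ v →
      |x v| ≤ r₁⁻¹ * Real.sqrt E * (Real.sqrt (2 * c))⁻¹ +
        A * Real.exp (-c * (v - V))) ∧
    (∀ v D, V ≤ v → 1 < D → c⁻¹ * Real.log D ≤ v - V →
      |x v| ≤ r₁⁻¹ * Real.sqrt E * (Real.sqrt (2 * c))⁻¹ + A / D) := by
  have hx : ∀ v, V ≤ v →
      |x v| ≤ r₁⁻¹ * √E * (√(2 * c))⁻¹ + A * exp (-c * (v - V)) := by
    intro v hv
    have hkernel : ∫ s in V..v, |θ s| / r₁ * exp (-c * (v - s)) ≤ r₁⁻¹ * √E * (√(2 * c))⁻¹ :=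
      calc ∫ s in V..v, |θ s| / r₁ * exp (-c * (v - s))
          = r₁⁻¹ * ∫ s in V..v, |θ s| * exp (-c * (v - s)) := by
            rw [← intervalIntegral.integral_const_mul]
            simp only [div_eq_inv_mul, mul_assoc]
        _ ≤ r₁⁻¹ * (√(∫ s in V..v, θ s ^ 2) * (√(2 * c))⁻¹) := by
            gcongr
            exact integral_abs_mul_exp_neg_mul_sub_le hc hv (hθint v hv) (hθsq v hv)
        _ ≤ r₁⁻¹ * √E * (√(2 * c))⁻¹ := by
            rw [← mul_assoc]
            gcongr
            exact hEbound v hv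
    linarith [hbound v hv]
  refine ⟨hx, fun v D hv hD hlog => (hx v hv).trans ?_⟩
  rw [div_eq_mul_inv]
  gcongr
  exact exp_neg_mul_le_inv_of_log_le hc (by linarith) hlog

/-- Combining the red-shift estimate with Cauchy–Schwarz and the energy bound:
    pointwise bound on x, with quantitative smallness after advanced time
    c⁻¹ log D. -/
theorem stmt_4 (V c r₁ A E : ℝ) (x θ : ℝ → ℝ)
    (hc : 0 < c) (hr₁ : 0 < r₁) (hA : 0 ≤ A) (hE : 0 ≤ E)
    (hθint : ∀ v, V ≤ v → IntervalIntegrable θ MeasureTheory.volume V v)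
    (hθsq : ∀ v, V ≤ v → IntervalIntegrable (fun s => (θ s) ^ 2) MeasureTheory.volume V v)
    (hEbound : ∀ v, V ≤ v → (∫ s in V..v, (θ s) ^ 2) ≤ E)
    (hbound : ∀ v, V ≤ v →
      |x v| ≤ (∫ s in V..v, (|θ s| / r₁) * Real.exp (-c * (v - s))) +
        A * Real.exp (-c * (v - V))) :
    (∀ v, V ≤ v →
      |x v| ≤ r₁⁻¹ * Real.sqrt E * (Real.sqrt (2 * c))⁻¹ +
        A * Real.exp (-c * (v - V))) ∧
    (∀ v D, V ≤ v → 1 < D → c⁻¹ * Real.log D ≤ v - V →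
      |x v| ≤ r₁⁻¹ * Real.sqrt E * (Real.sqrt (2 * c))⁻¹ + A / D) :=
  stmt_4_general V c r₁ A E x θ hc hr₁ hA hθint hθsq hEbound hbound
end

section
/- Let h > 1, 0 < p < 1, and define v̂ᵢ = hⁱ for integers i ≥ 0. Suppose f : [1,∞) → ℝ is nondecreasing with f(h v) − f(v) ≤ C v^{−2w} for all v ≥ 1, where C, w > 0. Then for each i there exist points ṽᵢ < vᵢ in [v̂ᵢ, v̂_{i+1}] with (h−1)v̂ᵢ^p /4 ≤ vᵢ − ṽᵢ and f(vᵢ) − f(ṽᵢ) ≤ 2C v̂ᵢ^{−2w−1+p}; consequently, vᵢ ≤ h² v̂ᵢ gives f(vᵢ) − f(ṽᵢ) ≤ 2 h^{2w+1−p} C vᵢ^{−2w−1+p}. -/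
/-!
Cut `[hⁱ, hⁱ⁺¹]` into `N = ⌊hⁱ⁽¹⁻ᵖ⁾⌋₊` equal pieces, each of length at least `(h - 1) hⁱᵖ`.
The increments of `f` over the pieces telescope to `f (hⁱ⁺¹) - f (hⁱ) ≤ C h^(-2wi)`, so one
piece carries at most the average, and `N ≥ hⁱ⁽¹⁻ᵖ⁾ / 2` turns this into the gain `hⁱ⁽⁻¹⁺ᵖ⁾`.
Since the exponent `-2w - 1 + p` is negative and the right endpoint is at most `hⁱ⁺¹`, the bound
transfers from `hⁱ` to that endpoint at the cost of `h^(2w + 1 - p)`.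
-/

open Finset

lemma exists_sub_le_div_of_partition (f : ℝ → ℝ) (a b : ℝ) {N : ℕ} (hN : 0 < N) :
    ∃ k < N, f (a + (k + 1) * ((b - a) / N)) - f (a + k * ((b - a) / N)) ≤ (f b - f a) / N := by
  set L := (b - a) / N
  have htelescope : ∑ k ∈ range N, (f (a + (k + 1) * L) - f (a + k * L)) = f b - f a := by
    have := sum_range_sub (fun k : ℕ => f (a + k * L)) N
    push_cast at this
    rw [this, mul_div_cancel₀ _ (by positivity : (N : ℝ) ≠ 0)]
    simp
  have hsum : ∑ k ∈ range N, (f (a + (k + 1) * L) - f (a + k * L)) ≤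
      ∑ _k ∈ range N, (f b - f a) / N := by
    rw [htelescope, sum_const, card_range, nsmul_eq_mul, mul_div_cancel₀ _ (by positivity)]
  obtain ⟨k, hk, hle⟩ := exists_le_of_sum_le (nonempty_range_iff.2 hN.ne') hsum
  exact ⟨k, mem_range.1 hk, hle⟩

lemma Nat.le_two_mul_floor {R : Type*} [Field R] [LinearOrder R] [IsStrictOrderedRing R]
    [FloorSemiring R] {x : R} (hx : 1 ≤ x) : x ≤ 2 * ⌊x⌋₊ := by
  have h1 : (1 : R) ≤ ⌊x⌋₊ := by exact_mod_cast Nat.le_floor (by exact_mod_cast hx)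
  linarith [Nat.lt_floor_add_one x]

lemma exists_subinterval_sub_le_two_mul_div (f : ℝ → ℝ) {a b x D : ℝ} (hab : a < b)
    (hx : 1 ≤ x) (hD : 0 ≤ D) (hfD : f b - f a ≤ D) :
    ∃ s t, a ≤ s ∧ s < t ∧ t ≤ b ∧ (b - a) / x ≤ t - s ∧ f t - f s ≤ 2 * D / x := by
  set N := ⌊x⌋₊
  have hN : 0 < N := Nat.floor_pos.2 hx
  have hNR : (0 : ℝ) < N := by exact_mod_cast hN
  obtain ⟨k, hkN, hk⟩ := exists_sub_le_div_of_partition f a b hN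
  set L := (b - a) / N
  have hL : 0 < L := div_pos (by linarith) hNR
  have hk1 : ((k : ℝ) + 1) * L ≤ b - a := by
    calc ((k : ℝ) + 1) * L ≤ N * L := by gcongr; exact_mod_cast hkN
      _ = b - a := mul_div_cancel₀ _ hNR.ne'
  refine ⟨a + k * L, a + (k + 1) * L, le_add_of_nonneg_right (by positivity), by nlinarith,
    by linarith, ?_, ?_⟩
  · calc (b - a) / x ≤ L :=
          div_le_div_of_nonneg_left (by linarith) hNR (Nat.floor_le (by linarith))
      _ = a + (k + 1) * L - (a + k * L) := by ring
  · calc _ ≤ (f b - f a) / N := hk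
      _ ≤ D / N := by gcongr
      _ ≤ D / (x / 2) :=
          div_le_div_of_nonneg_left hD (by positivity) (by linarith [Nat.le_two_mul_floor hx])
      _ = 2 * D / x := by ring

lemma Real.rpow_le_rpow_neg_mul_rpow_of_le_mul {h V v e : ℝ} (hh : 0 < h) (hV : 0 ≤ V)
    (hv : 0 < v) (hvV : v ≤ h * V) (he : e ≤ 0) : V ^ e ≤ h ^ (-e) * v ^ e := by
  calc V ^ e = h ^ (-e) * (h * V) ^ e := by
        rw [Real.mul_rpow hh.le hV, ← mul_assoc, ← Real.rpow_add hh, neg_add_cancel,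
          Real.rpow_zero, one_mul]
    _ ≤ h ^ (-e) * v ^ e :=
        mul_le_mul_of_nonneg_left (Real.rpow_le_rpow_of_nonpos hv hvV he) (by positivity)

lemma exists_subinterval_flux_le (f : ℝ → ℝ) {h p C w V : ℝ} (hh : 1 < h) (hp1 : p < 1)
    (hC : 0 < C) (hV : 1 ≤ V) (hflux : f (h * V) - f V ≤ C * V ^ (-(2 * w))) :
    ∃ vt vi, V ≤ vt ∧ vt < vi ∧ vi ≤ h * V ∧ (h - 1) * V ^ p ≤ vi - vt ∧
      f vi - f vt ≤ 2 * C * V ^ (-(2 * w) - 1 + p) := by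
  have hV0 : 0 < V := by linarith
  have hx : 1 ≤ V ^ (1 - p) := Real.one_le_rpow hV (by linarith)
  obtain ⟨vt, vi, hVvt, hlt, hvi, hlen, hfvi⟩ := exists_subinterval_sub_le_two_mul_div f
    (by nlinarith : V < h * V) hx (by positivity) hflux
  have hlen_eq : (h * V - V) / V ^ (1 - p) = (h - 1) * V ^ p := by
    rw [div_eq_iff (by positivity), mul_assoc, ← Real.rpow_add hV0]
    norm_num; ring
  have hflux_eq : 2 * (C * V ^ (-(2 * w))) / V ^ (1 - p) = 2 * C * V ^ (-(2 * w) - 1 + p) := by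
    rw [div_eq_iff (by positivity), mul_assoc, ← Real.rpow_add hV0]
    ring_nf
  exact ⟨vt, vi, hVvt, hlt, hvi, hlen_eq ▸ hlen, hflux_eq ▸ hfvi⟩

theorem stmt_13_general (h p C w : ℝ) (f : ℝ → ℝ)
    (hh : 1 < h) (hp1 : p < 1) (hC : 0 < C) (hw : 0 < w)
    (hflux : ∀ v, 1 ≤ v → f (h * v) - f v ≤ C * v ^ (-(2 * w))) :
    ∀ i : ℕ, ∃ vt vi : ℝ,
      vt ∈ Set.Icc ((h : ℝ) ^ i) ((h : ℝ) ^ (i + 1)) ∧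
      vi ∈ Set.Icc ((h : ℝ) ^ i) ((h : ℝ) ^ (i + 1)) ∧
      vt < vi ∧
      (h - 1) * ((h : ℝ) ^ i) ^ p / 4 ≤ vi - vt ∧
      f vi - f vt ≤ 2 * C * ((h : ℝ) ^ i) ^ (-(2 * w) - 1 + p) ∧
      vi ≤ h ^ 2 * (h : ℝ) ^ i ∧
      f vi - f vt ≤ 2 * h ^ (2 * w + 1 - p) * C * vi ^ (-(2 * w) - 1 + p) := by
  intro i
  have hV : 1 ≤ h ^ i := one_le_pow₀ hh.le
  obtain ⟨vt, vi, hVvt, hlt, hvi, hlen, hfvi⟩ :=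
    exists_subinterval_flux_le f hh hp1 hC hV (hflux _ hV)
  have hpow : 0 < (h - 1) * (h ^ i) ^ p := mul_pos (by linarith) (by positivity)
  have hdecay : 2 * C * (h ^ i) ^ (-(2 * w) - 1 + p) ≤
      2 * h ^ (2 * w + 1 - p) * C * vi ^ (-(2 * w) - 1 + p) := by
    have hle := Real.rpow_le_rpow_neg_mul_rpow_of_le_mul (by linarith) (by positivity)
      (by linarith) hvi (by linarith : -(2 * w) - 1 + p ≤ 0)
    rw [show -(-(2 * w) - 1 + p) = 2 * w + 1 - p by ring] at hle
    calc _ ≤ 2 * C * (h ^ (2 * w + 1 - p) * vi ^ (-(2 * w) - 1 + p)) := by gcongr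
      _ = _ := by ring
  rw [pow_succ']
  exact ⟨vt, vi, ⟨hVvt, by linarith⟩, ⟨by linarith, hvi⟩, hlt, by linarith, hfvi,
    by nlinarith, hfvi.trans hdecay⟩

/-- Dyadic pigeonhole along the event horizon (Lemma 9.1, mass part):
    in each dyadic interval [hⁱ, hⁱ⁺¹] there is a subinterval of length
    ≳ (h−1)hⁱᵖ/4 capturing flux at most 2C hⁱ^{−2w−1+p}, hence
    ≤ 2 h^{2w+1−p} C vᵢ^{−2w−1+p}. -/
theorem stmt_13 (h p C w : ℝ) (f : ℝ → ℝ)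
    (hh : 1 < h) (hp0 : 0 < p) (hp1 : p < 1) (hC : 0 < C) (hw : 0 < w)
    (hmono : MonotoneOn f (Set.Ici 1))
    (hflux : ∀ v, 1 ≤ v → f (h * v) - f v ≤ C * v ^ (-(2 * w))) :
    ∀ i : ℕ, ∃ vt vi : ℝ,
      vt ∈ Set.Icc ((h : ℝ) ^ i) ((h : ℝ) ^ (i + 1)) ∧
      vi ∈ Set.Icc ((h : ℝ) ^ i) ((h : ℝ) ^ (i + 1)) ∧
      vt < vi ∧
      (h - 1) * ((h : ℝ) ^ i) ^ p / 4 ≤ vi - vt ∧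
      f vi - f vt ≤ 2 * C * ((h : ℝ) ^ i) ^ (-(2 * w) - 1 + p) ∧
      vi ≤ h ^ 2 * (h : ℝ) ^ i ∧
      f vi - f vt ≤ 2 * h ^ (2 * w + 1 - p) * C * vi ^ (-(2 * w) - 1 + p) :=
  stmt_13_general h p C w f hh hp1 hC hw hflux
end
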